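/- Let U be a computably transparent, inflationary, idempotent partial multifunction on ℕ. Define a partial binary operation ∗_U on 𝒫(ℕ) by α ∗_U β := ⋃{U(a ∗ b) : a ∈ α, b ∈ β}, where α ∗_U β is defined if and only if for all a ∈ α and b ∈ β, a ∗ b is defined and a ∗ b ∈ dom(U). Then (𝒫(ℕ), ⊆, ∗_U) is an order partial combinatory algebra. -/

import Mathlib

namespace KleeneOracle

/-- `e ∗ x`: application of the `e`-th partial computable function on ℕ. -/
def ap (e x : ℕ) : Part ℕ :=
  Nat.Partrec.Code.eval (Denumerable.ofNat Nat.Partrec.Code e) x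

/-- `e ∗ A := {e ∗ a : a ∈ A}`. -/
def apSet (e : ℕ) (A : Set ℕ) : Set ℕ := {z | ∃ a ∈ A, z ∈ ap e a}

/-- A partial multifunction on ℕ. -/
abbrev Multifun := ℕ → Part (Set ℕ)

def Transparent (U : Multifun) : Prop :=
  ∃ u : ℕ, ∀ (e x : ℕ) (A : Set ℕ), A ∈ U x → (∀ y ∈ A, (ap e y).Dom) →
    ∃ c ∈ ap u e, ∃ d ∈ ap c x, ∃ B ∈ U d, B ⊆ apSet e A

def Inflationary (U : Multifun) : Prop :=
  ∃ η : ℕ, ∀ x : ℕ, ∃ c ∈ ap η x, ∃ B ∈ U c, B ⊆ {x}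

def mcomp (g f : Multifun) : Multifun := fun x =>
  ⟨∃ A ∈ f x, ∀ y ∈ A, (g y).Dom,
   fun _ => {z | ∃ A ∈ f x, ∃ y ∈ A, ∃ B ∈ g y, z ∈ B}⟩

def Idempotent (U : Multifun) : Prop :=
  ∃ μ : ℕ, ∀ (x : ℕ) (A : Set ℕ), A ∈ mcomp U U x →
    ∃ c ∈ ap μ x, ∃ B ∈ U c, B ⊆ A

def mRed (f g : Multifun) : Prop :=
  ∃ e : ℕ, ∀ (x : ℕ) (A : Set ℕ), A ∈ f x →
    ∃ c ∈ ap e x, ∃ B ∈ g c, B ⊆ A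

def wRed (f g : Multifun) : Prop :=
  ∃ em ep : ℕ, ∀ (x : ℕ) (A : Set ℕ), A ∈ f x →
    ∃ c ∈ ap em x, ∃ B ∈ g c, ∀ y ∈ B, ∃ z ∈ ap ep (Nat.pair x y), z ∈ A

def Weih (g : Multifun) : Multifun := fun w =>
  ⟨∃ c ∈ ap w.unpair.1 w.unpair.2.unpair.2, ∃ B ∈ g c,
     ∀ y ∈ B, (ap w.unpair.2.unpair.1 (Nat.pair w.unpair.2.unpair.2 y)).Dom,
   fun _ => {z | ∃ c ∈ ap w.unpair.1 w.unpair.2.unpair.2, ∃ B ∈ g c,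
     ∃ y ∈ B, z ∈ ap w.unpair.2.unpair.1 (Nat.pair w.unpair.2.unpair.2 y)}⟩

def idsq (g : Multifun) : Multifun := fun w =>
  if w.unpair.1 = 0 then Part.some {w.unpair.2}
  else if w.unpair.1 = 1 then g w.unpair.2
  else Part.none

def pWeih (g : Multifun) : Multifun := Weih (idsq g)

def pwRed (f g : Multifun) : Prop := wRed f (idsq g)

def Med (Q : Set ℕ) : Multifun := fun e =>
  ⟨∀ a ∈ Q, (ap e a).Dom, fun _ => apSet e Q⟩

def MedRed (P Q : Set ℕ) : Prop :=
  ∃ e : ℕ, (∀ a ∈ Q, (ap e a).Dom) ∧ apSet e Q ⊆ P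

def constMF (P : Set ℕ) : Multifun := fun _ => Part.some P

def imp (p q : Set ℕ) : Set ℕ := {e | ∀ x ∈ p, ∃ z ∈ ap e x, z ∈ q}

def OpMonotone (j : Set ℕ → Set ℕ) : Prop :=
  ∃ u : ℕ, ∀ p q : Set ℕ, ∀ a ∈ imp p q, ∃ c ∈ ap u a, c ∈ imp (j p) (j q)

def OpInflationary (j : Set ℕ → Set ℕ) : Prop :=
  ∃ e : ℕ, ∀ p : Set ℕ, e ∈ imp p (j p)

def OpIdempotent (j : Set ℕ → Set ℕ) : Prop :=
  ∃ e : ℕ, ∀ p : Set ℕ, e ∈ imp (j (j p)) (j p)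

def LawvereTierney (j : Set ℕ → Set ℕ) : Prop :=
  OpMonotone j ∧ OpInflationary j ∧ OpIdempotent j

def jU (U : Multifun) (p : Set ℕ) : Set ℕ := {x | ∃ A ∈ U x, A ⊆ p}

def SingleValued (U : Multifun) : Prop := ∀ x : ℕ, ∀ A ∈ U x, ∃ y : ℕ, A = {y}

def presInter (j : Set ℕ → Set ℕ) : Prop :=
  ∀ (ι : Type) [Nonempty ι] (p : ι → Set ℕ), j (⋂ i, p i) = ⋂ i, j (p i)

def presUnion (j : Set ℕ → Set ℕ) : Prop :=
  ∀ (ι : Type) (p : ι → Set ℕ), j (⋃ i, p i) = ⋃ i, j (p i)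

def Uop (j : Set ℕ → Set ℕ) : Multifun := fun x =>
  ⟨∃ p : Set ℕ, x ∈ j p, fun _ => ⋂₀ {p : Set ℕ | x ∈ j p}⟩

def mMorphism (e : ℕ) (f g : Multifun) : Prop :=
  ∀ (x : ℕ) (A : Set ℕ), A ∈ f x → ∃ c ∈ ap e x, ∃ B ∈ g c, B ⊆ A

def rMorphism (e : ℕ) (j k : Set ℕ → Set ℕ) : Prop :=
  ∀ p : Set ℕ, e ∈ imp (j p) (k p)

def rRed (j k : Set ℕ → Set ℕ) : Prop := ∃ e : ℕ, rMorphism e j k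


/-- The partial binary operation `α ∗_U β` on `𝒫(ℕ)`. -/
def opApp (U : Multifun) (α β : Set ℕ) : Part (Set ℕ) :=
  ⟨∀ a ∈ α, ∀ b ∈ β, ∃ c ∈ ap a b, (U c).Dom,
   fun _ => {z | ∃ a ∈ α, ∃ b ∈ β, ∃ c ∈ ap a b, ∃ B ∈ U c, z ∈ B}⟩

/-- An order partial combinatory algebra structure for a partial binary operation on a
partially ordered set. -/
def IsOrderPCA {M : Type*} [PartialOrder M] (app : M → M → Part M) : Prop :=
  (∀ (a b a' b' v : M), v ∈ app a b → a' ≤ a → b' ≤ b →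
    ∃ w ∈ app a' b', w ≤ v) ∧
  (∃ k s : M,
    (∀ a b : M, ∃ ka ∈ app k a, ∃ kab ∈ app ka b, kab ≤ a) ∧
    (∀ a b : M, ∃ sa ∈ app s a, ∃ sab ∈ app sa b,
      ∀ (c ac bc v : M), ac ∈ app a c → bc ∈ app b c → v ∈ app ac bc →
        ∃ w ∈ app sab c, w ≤ v))

/-!
The realizability operator `jU U p = {x | U x ⊆ p}` is a Lawvere–Tierney topology in the
realizability sense: transparency realizes its monotonicity, inflation the unit `p → jU U p`,
and idempotency the multiplication `jU U (jU U p) → jU U p`. Moreover `α ∗_U β` is defined and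
contained in `γ` exactly when every `a ∈ α` sends every `b ∈ β` into `jU U γ`. So `k` and `s`
can be taken to be codes of Kleene's `K` and `S` run in this monad: each partial application is
wrapped in the unit `η`, and the application `(a g) (b g)` inside `S` is evaluated with the
Kleisli extension `x ↦ μ ((u e) x)` of the realizer transparency provides.
-/

open Nat.Partrec (Code)

theorem partrec₂_ap : Partrec₂ ap :=
  Code.eval_part.comp ((Computable.ofNat _).comp Computable.fst) Computable.snd

theorem exists_computable_ap_eq {α : Type*} [Denumerable α] {f : α → ℕ →. ℕ}
    (hf : Partrec₂ f) : ∃ g : α → ℕ, Computable g ∧ ∀ a b, ap (g a) b = f a b := by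
  have hcode : Partrec fun n : ℕ => f (Denumerable.ofNat α n.unpair.1) n.unpair.2 :=
    hf.comp ((Computable.ofNat α).comp (Computable.fst.comp Primrec.unpair.to_comp))
      (Computable.snd.comp Primrec.unpair.to_comp)
  obtain ⟨c, hc⟩ := Code.exists_code.mp (Partrec.nat_iff.mp hcode)
  refine ⟨fun a => Encodable.encode (c.curry (Encodable.encode a)), ?_, fun a b => ?_⟩
  · exact (Primrec.encode.comp (Code.primrec₂_curry.comp (Primrec.const c)
      Primrec.encode)).to_comp
  · simp [ap, Code.eval_curry, hc]

theorem exists_ap_eq {f : ℕ →. ℕ} (hf : Partrec f) : ∃ e, ∀ x, ap e x = f x := by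
  obtain ⟨g, -, hg⟩ :=
    exists_computable_ap_eq (α := ℕ) (f := fun _ => f) (hf.comp Computable.snd)
  exact ⟨g 0, hg 0⟩

theorem imp_mono_left {p p' : Set ℕ} (h : p' ⊆ p) (q : Set ℕ) : imp p q ⊆ imp p' q :=
  fun _ he x hx => he x (h hx)

section LawvereTierney

variable {j : Set ℕ → Set ℕ}

def kleisliAp (u μ e x : ℕ) : Part ℕ :=
  (ap u e).bind fun c => (ap c x).bind (ap μ)

theorem partrec₂_kleisliAp (u μ : ℕ) : Partrec₂ (kleisliAp u μ) :=
  Partrec.bind (partrec₂_ap.comp (Computable.const u) Computable.fst) <|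
    Partrec.bind (partrec₂_ap.comp Computable.snd (Computable.snd.comp Computable.fst))
      (partrec₂_ap.comp (Computable.const μ) Computable.snd)

theorem exists_mem_kleisliAp {u μ e x : ℕ} {p q : Set ℕ}
    (hu : ∀ p q, ∀ a ∈ imp p q, ∃ c ∈ ap u a, c ∈ imp (j p) (j q))
    (hμ : ∀ p, μ ∈ imp (j (j p)) (j p)) (he : e ∈ imp p (j q)) (hx : x ∈ j p) :
    ∃ c ∈ kleisliAp u μ e x, c ∈ j q := by
  obtain ⟨c, hc, hcimp⟩ := hu p (j q) e he
  obtain ⟨d, hd, hdq⟩ := hcimp x hx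
  obtain ⟨r, hr, hrq⟩ := hμ q d hdq
  exact ⟨r, Part.mem_bind hc (Part.mem_bind hd hr), hrq⟩

theorem exists_curried_code {η : ℕ} (hη : ∀ p, η ∈ imp p (j p)) {f : ℕ → ℕ → ℕ}
    (hf : Computable₂ f) :
    ∃ c, ∀ α β γ : Set ℕ, (∀ a ∈ α, ∀ b ∈ β, f a b ∈ γ) → c ∈ imp α (j (imp β (j γ))) := by
  obtain ⟨g, hg, hgap⟩ := exists_computable_ap_eq (f := fun a b => ap η (f a b))
    (partrec₂_ap.comp (Computable.const η) hf)
  obtain ⟨c, hc⟩ := exists_ap_eq (partrec₂_ap.comp (Computable.const η) hg)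
  refine ⟨c, fun α β γ hf a ha => ?_⟩
  have hga : g a ∈ imp β (j γ) := fun b hb => by
    simpa only [hgap] using hη γ (f a b) (hf a ha b hb)
  simpa only [hc] using hη _ (g a) hga

theorem OpInflationary.exists_k (hj : OpInflationary j) :
    ∃ k, ∀ α β : Set ℕ, k ∈ imp α (j (imp β (j α))) := by
  obtain ⟨η, hη⟩ := hj
  obtain ⟨k, hk⟩ := exists_curried_code hη (f := fun a _ => a) Computable.fst
  exact ⟨k, fun α β => hk α β α fun a ha _ _ => ha⟩

theorem LawvereTierney.exists_s (hj : LawvereTierney j) :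
    ∃ s, ∀ α β : Set ℕ, ∃ T : Set ℕ, s ∈ imp α (j (imp β (j T))) ∧
      ∀ γ p q r : Set ℕ, α ⊆ imp γ (j p) → β ⊆ imp γ (j q) → p ⊆ imp q (j r) →
        T ⊆ imp γ (j r) := by
  obtain ⟨⟨u, hu⟩, ⟨η, hη⟩, ⟨μ, hμ⟩⟩ := hj
  -- `F (b, g)` realizes `x ↦ x (b g)` and `G (a, b)` realizes `g ↦ (a g) (b g)`.
  obtain ⟨F, hF, hFap⟩ := exists_computable_ap_eq (α := ℕ × ℕ)
    (f := fun bg x => (ap bg.1 bg.2).bind (kleisliAp u μ x))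
    (Partrec.bind (partrec₂_ap.comp (Computable.fst.comp Computable.fst)
      (Computable.snd.comp Computable.fst))
      ((partrec₂_kleisliAp u μ).comp (Computable.snd.comp Computable.fst) Computable.snd))
  obtain ⟨G, hG, hGap⟩ := exists_computable_ap_eq (α := ℕ × ℕ)
    (f := fun ab g => (ap ab.1 g).bind (kleisliAp u μ (F (ab.2, g))))
    (Partrec.bind (partrec₂_ap.comp (Computable.fst.comp Computable.fst) Computable.snd)
      ((partrec₂_kleisliAp u μ).comp (hF.comp ((Computable.snd.comp (Computable.fst.comp
        Computable.fst)).pair (Computable.snd.comp Computable.fst))) Computable.snd))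
  obtain ⟨s, hs⟩ := exists_curried_code hη (f := fun a b => G (a, b)) (hG.comp Computable.id)
  refine ⟨s, fun α β => ⟨Set.image2 (fun a b => G (a, b)) α β,
    hs α β _ fun a ha b hb => Set.mem_image2_of_mem ha hb, ?_⟩⟩
  rintro γ p q r hα hβ hpq _ ⟨a, ha, b, hb, rfl⟩ g hg
  obtain ⟨w, hw, hwp⟩ := hα ha g hg
  have hFr : F (b, g) ∈ imp p (j r) := fun x hx => by
    obtain ⟨w', hw', hw'q⟩ := hβ hb g hg
    obtain ⟨c, hc, hcr⟩ := exists_mem_kleisliAp hu hμ (hpq hx) hw'q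
    exact ⟨c, hFap (b, g) x ▸ Part.mem_bind hw' hc, hcr⟩
  obtain ⟨c, hc, hcr⟩ := exists_mem_kleisliAp hu hμ hFr hwp
  exact ⟨c, hGap (a, b) g ▸ Part.mem_bind hw hc, hcr⟩

end LawvereTierney

section Oracle

variable {U : Multifun}

theorem Transparent.opMonotone (hU : Transparent U) : OpMonotone (jU U) := by
  obtain ⟨u, hu⟩ := hU
  -- `u` itself need not be total, so pass to the code of `e ↦ (x ↦ (u e) x)`.
  obtain ⟨g, hg, hgap⟩ :=
    exists_computable_ap_eq (f := fun e x => (ap u e).bind fun c => ap c x)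
    (Partrec.bind (partrec₂_ap.comp (Computable.const u) Computable.fst)
      (partrec₂_ap.comp Computable.snd (Computable.snd.comp Computable.fst)))
  obtain ⟨u', hu'⟩ := exists_ap_eq hg.partrec
  refine ⟨u', fun p q e he => ⟨g e, hu' e ▸ Part.mem_some _, fun x ⟨A, hA, hAp⟩ => ?_⟩⟩
  have htot : ∀ y ∈ A, (ap e y).Dom := fun y hy => by
    obtain ⟨z, hz, -⟩ := he y (hAp hy)
    exact Part.dom_iff_mem.mpr ⟨z, hz⟩
  obtain ⟨c, hc, d, hd, B, hB, hBA⟩ := hu e x A hA htot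
  refine ⟨d, hgap e x ▸ Part.mem_bind hc hd, B, hB, fun z hz => ?_⟩
  obtain ⟨y, hy, hzy⟩ := hBA hz
  obtain ⟨z', hz', hz'q⟩ := he y (hAp hy)
  exact Part.mem_unique hz' hzy ▸ hz'q

theorem Inflationary.opInflationary (hU : Inflationary U) : OpInflationary (jU U) := by
  obtain ⟨η, hη⟩ := hU
  refine ⟨η, fun p x hx => ?_⟩
  obtain ⟨c, hc, B, hB, hBx⟩ := hη x
  exact ⟨c, hc, B, hB, hBx.trans (Set.singleton_subset_iff.mpr hx)⟩

theorem Idempotent.opIdempotent (hU : Idempotent U) : OpIdempotent (jU U) := by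
  obtain ⟨μ, hμ⟩ := hU
  refine ⟨μ, fun p x ⟨A, hA, hAp⟩ => ?_⟩
  have hAU : ∀ y ∈ A, (U y).Dom := fun y hy => by
    obtain ⟨B, hB, -⟩ := hAp hy
    exact Part.dom_iff_mem.mpr ⟨B, hB⟩
  obtain ⟨c, hc, B, hB, hBA⟩ := hμ x _ ⟨⟨A, hA, hAU⟩, rfl⟩
  refine ⟨c, hc, B, hB, fun z hz => ?_⟩
  obtain ⟨A', hA', y, hy, C, hC, hzC⟩ := hBA hz
  obtain rfl := Part.mem_unique hA' hA
  obtain ⟨C', hC', hC'p⟩ := hAp hy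
  exact hC'p (Part.mem_unique hC hC' ▸ hzC)

theorem exists_mem_opApp_subset_iff {α β γ : Set ℕ} :
    (∃ v ∈ opApp U α β, v ⊆ γ) ↔ α ⊆ imp β (jU U γ) := by
  constructor
  · rintro ⟨v, ⟨hdom, rfl⟩, hvγ⟩ a ha b hb
    obtain ⟨c, hc, hUc⟩ := hdom a ha b hb
    exact ⟨c, hc, _, Part.get_mem hUc,
      fun z hz => hvγ ⟨a, ha, b, hb, c, hc, _, Part.get_mem hUc, hz⟩⟩
  · intro h
    refine ⟨_, ⟨fun a ha b hb => ?_, rfl⟩, ?_⟩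
    · obtain ⟨c, hc, B, hB, -⟩ := h ha b hb
      exact ⟨c, hc, Part.dom_iff_mem.mpr ⟨B, hB⟩⟩
    · rintro z ⟨a, ha, b, hb, c, hc, B, hB, hz⟩
      obtain ⟨c', hc', B', hB', hB'γ⟩ := h ha b hb
      obtain rfl := Part.mem_unique hc hc'
      exact hB'γ (Part.mem_unique hB hB' ▸ hz)

theorem subset_imp_of_mem_opApp {α β v : Set ℕ} (hv : v ∈ opApp U α β) :
    α ⊆ imp β (jU U v) :=
  exists_mem_opApp_subset_iff.mp ⟨v, hv, subset_rfl⟩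

theorem exists_opApp_opApp_subset {c : ℕ} {α β γ : Set ℕ}
    (hc : c ∈ imp α (jU U (imp β (jU U γ)))) :
    ∃ v₁ ∈ opApp U {c} α, ∃ v₂ ∈ opApp U v₁ β, v₂ ⊆ γ := by
  obtain ⟨v₁, hv₁, hv₁γ⟩ :=
    exists_mem_opApp_subset_iff.mpr (Set.singleton_subset_iff.mpr hc)
  exact ⟨v₁, hv₁, exists_mem_opApp_subset_iff.mpr hv₁γ⟩

end Oracle

/-- for a computably transparent, inflationary, idempotent partial
multifunction `U`, `(𝒫(ℕ), ⊆, ∗_U)` is an order partial combinatory algebra. -/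
theorem orderPCA_of_oracle (U : Multifun)
    (h1 : Transparent U) (h2 : Inflationary U) (h3 : Idempotent U) :
    IsOrderPCA (opApp U) := by
  have hj : LawvereTierney (jU U) := ⟨h1.opMonotone, h2.opInflationary, h3.opIdempotent⟩
  obtain ⟨k, hk⟩ := hj.2.1.exists_k
  obtain ⟨s, hs⟩ := hj.exists_s
  refine ⟨fun α β α' β' v hv hα hβ => ?_, {k}, {s}, fun α β => ?_, fun α β => ?_⟩
  · exact exists_mem_opApp_subset_iff.mpr fun a ha =>
      imp_mono_left hβ _ (subset_imp_of_mem_opApp hv (hα ha))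
  · exact exists_opApp_opApp_subset (hk α β)
  · obtain ⟨T, hsT, hT⟩ := hs α β
    obtain ⟨v₁, hv₁, v₂, hv₂, hv₂T⟩ := exists_opApp_opApp_subset hsT
    refine ⟨v₁, hv₁, v₂, hv₂, fun γ ac bc v hac hbc hv => ?_⟩
    exact exists_mem_opApp_subset_iff.mpr <| hv₂T.trans <| hT γ ac bc v
      (subset_imp_of_mem_opApp hac) (subset_imp_of_mem_opApp hbc) (subset_imp_of_mem_opApp hv)

end KleeneOracle
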